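/- arXiv:2505.17962 — 3 statements merged into one kernel-verified Lean document; each statement's English description precedes it below -/
import Mathlib

section
/- Let x ∈ ℝ, h > 0, and let f : ℝ → ℝ be continuous and strictly concave on [x, x + h] with f(x + h) ≠ f(x). Define p* = ((1/h)∫_x^{x+h} f(t) dt − f(x)) / (f(x + h) − f(x)), so that h·(p*·f(x+h) + (1 − p*)·f(x)) = ∫_x^{x+h} f(t) dt. Then f(x + h) > f(x) implies p* > 1/2, and f(x + h) < f(x) implies p* < 1/2. -/
/-! A concave function lies above its chord, strictly inside the interval when the concavity is
strict, so its integral exceeds the trapezoid value `h (f x + f (x + h)) / 2`. Dividing by `h`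
gives `(1 / h) ∫ f - f x > (f (x + h) - f x) / 2`, which is `p* > 1/2` or `p* < 1/2` according to
the sign of `f (x + h) - f x`. -/

open Set

theorem integral_secant (a b c d : ℝ) :
    ∫ t in a..b, ((b - t) * c + (t - a) * d) = (b - a) ^ 2 / 2 * (c + d) := by
  rw [intervalIntegral.integral_add (Continuous.intervalIntegrable (by fun_prop) _ _)
      (Continuous.intervalIntegrable (by fun_prop) _ _), intervalIntegral.integral_mul_const,
    intervalIntegral.integral_mul_const, intervalIntegral.integral_comp_sub_left (fun t => t),
    intervalIntegral.integral_comp_sub_right (fun t => t), integral_id, integral_id]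
  ring

theorem StrictConcaveOn.secant_lt {f : ℝ → ℝ} {s : Set ℝ} {x y z : ℝ}
    (hf : StrictConcaveOn ℝ s f) (hx : x ∈ s) (hz : z ∈ s) (hxy : x < y) (hyz : y < z) :
    (z - y) * f x + (y - x) * f z < (z - x) * f y := by
  have h := hf.neg.secant_strict_mono_aux1 hx hz hxy hyz
  simp only [Pi.neg_apply] at h
  linarith

theorem StrictConcaveOn.trapezoid_lt_integral {f : ℝ → ℝ} {a b : ℝ} (hab : a < b)
    (hc : ContinuousOn f (Icc a b)) (hf : StrictConcaveOn ℝ (Icc a b) f) :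
    (b - a) * ((f a + f b) / 2) < ∫ t in a..b, f t := by
  have ha : a ∈ Icc a b := left_mem_Icc.2 hab.le
  have hb : b ∈ Icc a b := right_mem_Icc.2 hab.le
  have hsecant_le : ∀ t ∈ Ioc a b, (b - t) * f a + (t - a) * f b ≤ (b - a) * f t := by
    rintro t ⟨hat, htb⟩
    rcases htb.lt_or_eq with htb | rfl
    · exact (hf.secant_lt ha hb hat htb).le
    · linarith
  have hmid : a < (a + b) / 2 ∧ (a + b) / 2 < b := ⟨by linarith, by linarith⟩
  have hlt : ∫ t in a..b, ((b - t) * f a + (t - a) * f b) < ∫ t in a..b, (b - a) * f t :=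
    intervalIntegral.integral_lt_integral_of_continuousOn_of_le_of_exists_lt hab
      (Continuous.continuousOn (by fun_prop)) (continuousOn_const.mul hc) hsecant_le
      ⟨(a + b) / 2, ⟨hmid.1.le, hmid.2.le⟩, hf.secant_lt ha hb hmid.1 hmid.2⟩
  rw [integral_secant, intervalIntegral.integral_const_mul,
    show (b - a) ^ 2 / 2 * (f a + f b) = (b - a) * ((b - a) * ((f a + f b) / 2)) by ring] at hlt
  exact lt_of_mul_lt_mul_left hlt (sub_nonneg.2 hab.le)

theorem optimal_terminal_weight_half_general (x h : ℝ) (hh : 0 < h) (f : ℝ → ℝ)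
    (hcont : ContinuousOn f (Set.Icc x (x + h)))
    (hconc : StrictConcaveOn ℝ (Set.Icc x (x + h)) f)
    (pstar : ℝ)
    (hp : pstar = ((1 / h) * (∫ t in x..(x + h), f t) - f x) / (f (x + h) - f x)) :
    (f x < f (x + h) → 1 / 2 < pstar) ∧ (f (x + h) < f x → pstar < 1 / 2) := by
  have htrap := hconc.trapezoid_lt_integral (lt_add_of_pos_right x hh) hcont
  rw [add_sub_cancel_left] at htrap
  have hmean : (f (x + h) - f x) / 2 < (1 / h) * (∫ t in x..(x + h), f t) - f x := by
    rw [one_div_mul_eq_div, lt_sub_iff_add_lt, lt_div_iff₀ hh]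
    linarith
  subst hp
  constructor
  · intro hlt
    rw [lt_div_iff₀ (sub_pos.2 hlt)]
    linarith
  · intro hlt
    rw [div_lt_iff_of_neg (sub_neg.2 hlt)]
    linarith

/-- Analytic core of Proposition 3: for `f` continuous and strictly concave on `[x, x+h]`
with `f (x+h) ≠ f x`, the exact terminal weight
`p* = ((1/h) ∫_x^{x+h} f − f x) / (f (x+h) − f x)` (so that
`h (p* f (x+h) + (1−p*) f x) = ∫_x^{x+h} f`) satisfies `p* > 1/2` when `f (x+h) > f x`
and `p* < 1/2` when `f (x+h) < f x`. -/
theorem optimal_terminal_weight_half (x h : ℝ) (hh : 0 < h) (f : ℝ → ℝ)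
    (hcont : ContinuousOn f (Set.Icc x (x + h)))
    (hconc : StrictConcaveOn ℝ (Set.Icc x (x + h)) f)
    (hne : f (x + h) ≠ f x)
    (pstar : ℝ)
    (hp : pstar = ((1 / h) * (∫ t in x..(x + h), f t) - f x) / (f (x + h) - f x)) :
    (f x < f (x + h) → 1 / 2 < pstar) ∧ (f (x + h) < f x → pstar < 1 / 2) :=
  optimal_terminal_weight_half_general x h hh f hcont hconc pstar hp
end

section
/- Let F ∈ (0,1) and a, b > 0. Define V(p) = p²a²/F + (1−p)²b²/(1−F) − (p·a + (1−p)·b)² for p ∈ ℝ. Then V is a quadratic polynomial in p with strictly positive leading coefficient a²/F + b²/(1−F) − (a − b)², and V attains its unique global minimum at p* = bF/(bF + a(1−F)); that is, V(p) > V(p*) for all p ≠ p*. -/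
/-! Expanding the squares shows that `V` is a quadratic in `p`. Its leading coefficient
equals `(bF + a(1−F))² / (F(1−F))`, positive since `a, b > 0` and `0 < F < 1`, and `p*` is
the vertex `−c₁ / (2 · leading coefficient)`; a quadratic with positive leading coefficient
exceeds its value at the vertex by `leading coefficient · (p − p*)²`. -/

section Quadratic

variable {K : Type*} [CommRing K]

theorem quadratic_sub_quadratic_of_vertex {A B C p q : K} (hq : 2 * A * q + B = 0) :
    (A * p ^ 2 + B * p + C) - (A * q ^ 2 + B * q + C) = A * (p - q) ^ 2 := by
  linear_combination (p - q) * hq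

variable [LinearOrder K] [IsStrictOrderedRing K]

theorem quadratic_vertex_lt {A B C p q : K} (hA : 0 < A) (hq : 2 * A * q + B = 0)
    (hpq : p ≠ q) : A * q ^ 2 + B * q + C < A * p ^ 2 + B * p + C := by
  have hsq : 0 < A * (p - q) ^ 2 := mul_pos hA (sq_pos_of_ne_zero (sub_ne_zero.2 hpq))
  linarith [quadratic_sub_quadratic_of_vertex (C := C) (p := p) hq]

end Quadratic

namespace IWST

variable {F : ℝ} (a b : ℝ)

theorem variance_eq_quadratic (p : ℝ) :
    p ^ 2 * a ^ 2 / F + (1 - p) ^ 2 * b ^ 2 / (1 - F) - (p * a + (1 - p) * b) ^ 2 =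
      (a ^ 2 / F + b ^ 2 / (1 - F) - (a - b) ^ 2) * p ^ 2 +
        (-2 * b ^ 2 / (1 - F) - 2 * (a - b) * b) * p + (b ^ 2 / (1 - F) - b ^ 2) := by
  ring

theorem leadingCoeff_eq (hF0 : F ≠ 0) (hF1 : 1 - F ≠ 0) :
    a ^ 2 / F + b ^ 2 / (1 - F) - (a - b) ^ 2 = (b * F + a * (1 - F)) ^ 2 / (F * (1 - F)) := by
  field_simp
  ring

variable {a b}

theorem denom_pos (hF : F ∈ Set.Ioo (0 : ℝ) 1) (ha : 0 < a) (hb : 0 < b) :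
    0 < b * F + a * (1 - F) := by
  have := hF.1; have := sub_pos.2 hF.2
  positivity

theorem leadingCoeff_pos (hF : F ∈ Set.Ioo (0 : ℝ) 1) (ha : 0 < a) (hb : 0 < b) :
    0 < a ^ 2 / F + b ^ 2 / (1 - F) - (a - b) ^ 2 := by
  have hF0 := hF.1; have hF1 := sub_pos.2 hF.2
  rw [leadingCoeff_eq a b hF0.ne' hF1.ne']
  have := denom_pos hF ha hb
  positivity

theorem pstar_isVertex (hF : F ∈ Set.Ioo (0 : ℝ) 1) (ha : 0 < a) (hb : 0 < b) :
    2 * (a ^ 2 / F + b ^ 2 / (1 - F) - (a - b) ^ 2) * (b * F / (b * F + a * (1 - F))) +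
      (-2 * b ^ 2 / (1 - F) - 2 * (a - b) * b) = 0 := by
  have hF0 := hF.1.ne'; have hF1 := (sub_pos.2 hF.2).ne'
  have hD := (denom_pos hF ha hb).ne'
  rw [leadingCoeff_eq a b hF0 hF1]
  field_simp
  ring

end IWST

open IWST in
/-- Variance minimisation for IW-ST(p): the variance
`V p = p² a² / F + (1−p)² b² / (1−F) − (p a + (1−p) b)²` is a quadratic in `p` with
strictly positive leading coefficient `a²/F + b²/(1−F) − (a−b)²`, and attains its unique
global minimum at `p* = bF / (bF + a(1−F))`. -/
theorem iwst_variance_quadratic_min (F a b : ℝ) (hF : F ∈ Set.Ioo (0 : ℝ) 1)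
    (ha : 0 < a) (hb : 0 < b)
    (V : ℝ → ℝ)
    (hV : ∀ p, V p =
      p ^ 2 * a ^ 2 / F + (1 - p) ^ 2 * b ^ 2 / (1 - F) - (p * a + (1 - p) * b) ^ 2)
    (pstar : ℝ) (hp : pstar = b * F / (b * F + a * (1 - F))) :
    (0 < a ^ 2 / F + b ^ 2 / (1 - F) - (a - b) ^ 2) ∧
    (∃ c₁ c₀ : ℝ, ∀ p, V p =
      (a ^ 2 / F + b ^ 2 / (1 - F) - (a - b) ^ 2) * p ^ 2 + c₁ * p + c₀) ∧
    (∀ p, p ≠ pstar → V pstar < V p) := by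
  have hVq : ∀ p, V p = _ := fun p => (hV p).trans (variance_eq_quadratic a b p)
  refine ⟨leadingCoeff_pos hF ha hb, ⟨_, _, hVq⟩, fun p hne => ?_⟩
  rw [hVq, hVq]
  exact quadratic_vertex_lt (leadingCoeff_pos hF ha hb) (hp ▸ pstar_isVertex hF ha hb) hne
end

section
/- Let m ∈ ℝ and σ > 0, and define f(τ) = ln(τ/σ) + (m² + σ² − τ²)/(2τ²) for τ > 0. Then f attains its unique global minimum on (0, ∞) at τ = √(m² + σ²), and the minimum value is f(√(m² + σ²)) = (1/2)·ln(1 + (m/σ)²). -/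
/-! With `x = (m² + σ²)/τ²`, the objective differs from its value at `τ = √(m² + σ²)` by
`(x - 1 - ln x)/2`, which is positive unless `x = 1` because `ln x < x - 1` for `x ≠ 1`. -/

open Real

lemma log_add_sub_sq_div_eq {s τ : ℝ} (hs : 0 < s) (hτ : 0 < τ) :
    log τ + (s - τ ^ 2) / (2 * τ ^ 2) = log √s + (s / τ ^ 2 - 1 - log (s / τ ^ 2)) / 2 := by
  rw [log_div hs.ne' (by positivity), log_pow, log_sqrt hs.le]
  field_simp
  ring

lemma div_sq_ne_one_of_ne_sqrt {s τ : ℝ} (hτ : 0 < τ) (hne : τ ≠ √s) : s / τ ^ 2 ≠ 1 := by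
  intro h
  rw [div_eq_one_iff_eq (by positivity)] at h
  exact hne (by rw [h, sqrt_sq hτ.le])

lemma log_sqrt_lt_log_add_sub_sq_div {s τ : ℝ} (hs : 0 < s) (hτ : 0 < τ) (hne : τ ≠ √s) :
    log √s < log τ + (s - τ ^ 2) / (2 * τ ^ 2) := by
  rw [log_add_sub_sq_div_eq hs hτ]
  have := log_lt_sub_one_of_pos (by positivity) (div_sq_ne_one_of_ne_sqrt hτ hne)
  linarith

lemma one_add_div_sq_eq {m σ : ℝ} (hσ : σ ≠ 0) : 1 + (m / σ) ^ 2 = (m ^ 2 + σ ^ 2) / σ ^ 2 := by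
  field_simp
  ring

/-- Empirical-Bayes optimisation of the prior variance: the per-weight KL divergence
`f τ = ln(τ/σ) + (m² + σ² − τ²)/(2τ²)` attains its unique global minimum on `(0, ∞)` at
`τ = √(m² + σ²)`, with minimum value `(1/2) ln(1 + (m/σ)²)`. -/
theorem kl_prior_variance_min (m σ : ℝ) (hσ : 0 < σ) (f : ℝ → ℝ)
    (hf : ∀ τ, f τ = Real.log (τ / σ) + (m ^ 2 + σ ^ 2 - τ ^ 2) / (2 * τ ^ 2)) :
    (∀ τ, 0 < τ → τ ≠ Real.sqrt (m ^ 2 + σ ^ 2) →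
      f (Real.sqrt (m ^ 2 + σ ^ 2)) < f τ) ∧
    f (Real.sqrt (m ^ 2 + σ ^ 2)) = (1 / 2) * Real.log (1 + (m / σ) ^ 2) := by
  have hs : 0 < m ^ 2 + σ ^ 2 := by positivity
  have hf_sqrt : f √(m ^ 2 + σ ^ 2) = log √(m ^ 2 + σ ^ 2) - log σ := by
    rw [hf, sq_sqrt hs.le, sub_self, zero_div, add_zero, log_div (sqrt_pos.2 hs).ne' hσ.ne']
  refine ⟨fun τ hτ hne => ?_, ?_⟩
  · rw [hf_sqrt, hf, log_div hτ.ne' hσ.ne']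
    linarith [log_sqrt_lt_log_add_sub_sq_div hs hτ hne]
  · rw [hf_sqrt, log_sqrt hs.le, one_add_div_sq_eq hσ.ne', log_div hs.ne' (by positivity), log_pow]
    push_cast
    ring
end
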